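/- arXiv:2002.06077 — 5 statements merged into one kernel-verified Lean document; each statement's English description precedes it below -/
import Mathlib

section
/- Let x ∈ Ω with g = Ax − b, let ᾱ > 0, let g^f be the free gradient and g^r the reduced free gradient at x with parameter ᾱ. Then P_Ω(x − ᾱ·g^f) = x − ᾱ·g^r. -/
open Matrix

/-!
Coordinatewise, the projection is the clamp `min u (max l ·)`. At an active coordinate both
steps leave `x_j` fixed. At a free coordinate with `g_j > 0` the step `x_j - α g_j` stays below
`u_j`, so only the lower clamp acts, and `max l (x - α g) = x - min (x - l) (α g)`; the case
`g_j ≤ 0` is symmetric with the upper clamp.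
-/

section Clamp

variable {K : Type*} [Field K] [LinearOrder K] [IsStrictOrderedRing K] {α : K}

theorem max_sub_mul_eq_sub_mul_min (hα : 0 < α) (l x g : K) :
    max l (x - α * g) = x - α * min ((x - l) / α) g := by
  rw [mul_min_of_nonneg _ _ hα.le, mul_div_cancel₀ _ hα.ne', ← max_sub_sub_left, sub_sub_cancel]

theorem min_sub_mul_eq_sub_mul_max (hα : 0 < α) (u x g : K) :
    min u (x - α * g) = x - α * max ((x - u) / α) g := by
  rw [mul_max_of_nonneg _ _ hα.le, mul_div_cancel₀ _ hα.ne', ← min_sub_sub_left, sub_sub_cancel]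

theorem clamp_sub_mul_of_pos (hα : 0 < α) {l u x g : K} (hlx : l ≤ x) (hxu : x ≤ u) (hg : 0 < g) :
    min u (max l (x - α * g)) = x - α * min ((x - l) / α) g := by
  have hstep : x - α * g ≤ u := by linarith [mul_pos hα hg]
  rw [min_eq_right (max_le (hlx.trans hxu) hstep), max_sub_mul_eq_sub_mul_min hα]

theorem clamp_sub_mul_of_nonpos (hα : 0 < α) {l u x g : K} (hlx : l ≤ x) (hg : g ≤ 0) :
    min u (max l (x - α * g)) = x - α * max ((x - u) / α) g := by
  have hstep : l ≤ x - α * g := by linarith [mul_nonpos_of_nonneg_of_nonpos hα.le hg]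
  rw [max_eq_right hstep, min_sub_mul_eq_sub_mul_max hα]

end Clamp

theorem proj_freeGradient_step_eq_reducedFreeGradient_step_general (n : ℕ)
    (l u x : Fin n → ℝ)
    (hx : l ≤ x ∧ x ≤ u)
    (g : Fin n → ℝ)
    (P : (Fin n → ℝ) → (Fin n → ℝ))
    (hP : ∀ v j, P v j = min (u j) (max (l j) (v j)))
    (α : ℝ) (hα : 0 < α) (gf gr : Fin n → ℝ)
    (hgf : ∀ j, gf j = if x j = l j ∨ x j = u j then 0 else g j)
    (hgr : ∀ j, gr j = if x j = l j ∨ x j = u j then 0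
      else if 0 < g j then min ((x j - l j) / α) (g j)
      else max ((x j - u j) / α) (g j)) :
    P (x - α • gf) = x - α • gr := by
  funext j
  have hlx := hx.1 j
  have hxu := hx.2 j
  simp only [hP, Pi.sub_apply, Pi.smul_apply, smul_eq_mul, hgf, hgr]
  by_cases hactive : x j = l j ∨ x j = u j
  · rw [if_pos hactive, if_pos hactive, mul_zero, sub_zero, max_eq_right hlx, min_eq_right hxu]
  rw [if_neg hactive, if_neg hactive]
  by_cases hg : 0 < g j
  · rw [if_pos hg, clamp_sub_mul_of_pos hα hlx hxu hg]
  · rw [if_neg hg, clamp_sub_mul_of_nonpos hα hlx (not_lt.mp hg)]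

/-- The projected free-gradient step coincides with the reduced free-gradient step:
`P_Ω(x − ᾱ g^f) = x − ᾱ g^r`. -/
theorem proj_freeGradient_step_eq_reducedFreeGradient_step (n : ℕ)
    (A : Matrix (Fin n) (Fin n) ℝ) (b l u x : Fin n → ℝ)
    (hlu : l ≤ u) (hx : l ≤ x ∧ x ≤ u)
    (g : Fin n → ℝ) (hg : g = A *ᵥ x - b)
    (P : (Fin n → ℝ) → (Fin n → ℝ))
    (hP : ∀ v j, P v j = min (u j) (max (l j) (v j)))
    (α : ℝ) (hα : 0 < α) (gf gr : Fin n → ℝ)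
    (hgf : ∀ j, gf j = if x j = l j ∨ x j = u j then 0 else g j)
    (hgr : ∀ j, gr j = if x j = l j ∨ x j = u j then 0
      else if 0 < g j then min ((x j - l j) / α) (g j)
      else max ((x j - u j) / α) (g j)) :
    P (x - α • gf) = x - α • gr :=
  proj_freeGradient_step_eq_reducedFreeGradient_step_general n l u x hx g P hP α hα gf gr hgf hgr
end

section
/- Let A be a symmetric positive semidefinite real n×n matrix with ‖A‖ > 0, x ∈ Ω, g = Ax − b, and let d be either the free gradient g^f or the reduced free gradient g^r (with any parameter ᾱ' > 0) at x, with Ad ≠ 0. Then for every step length ᾱ with 0 < ᾱ ≤ 2‖A‖⁻¹, the fixed-step expansion satisfies f(x − ᾱd) ≤ f(x), i.e. the unconstrained cost function does not increase. -/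
/-!
Along the ray, `f (x - α • d) = f x - α (d ⬝ᵥ g) + α² / 2 (d ⬝ᵥ A d)` by symmetry of `A`.
Both the free and the reduced free gradient have each `d j` between `0` and `g j`, so
`d ⬝ᵥ d ≤ d ⬝ᵥ g`; and `d ⬝ᵥ A d ≤ ‖A‖ (d ⬝ᵥ d)` by Cauchy–Schwarz. Hence for `α ‖A‖ ≤ 2` the
quadratic term is at most `α (d ⬝ᵥ d) ≤ α (d ⬝ᵥ g)`, and the cost does not increase.
-/

open Matrix

noncomputable section

section Gradients

variable {ι : Type*}

def freeGradient (l u x g : ι → ℝ) : ι → ℝ :=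
  fun j => if x j = l j ∨ x j = u j then 0 else g j

def reducedFreeGradient (α' : ℝ) (l u x g : ι → ℝ) : ι → ℝ :=
  fun j => if x j = l j ∨ x j = u j then 0
    else if 0 < g j then min ((x j - l j) / α') (g j)
    else max ((x j - u j) / α') (g j)

theorem freeGradient_mul_self_le (l u x g : ι → ℝ) (j : ι) :
    freeGradient l u x g j * freeGradient l u x g j ≤ freeGradient l u x g j * g j := by
  unfold freeGradient
  split_ifs <;> simp

theorem reducedFreeGradient_mul_self_le {α' : ℝ} (hα' : 0 < α') {l u x : ι → ℝ}
    (hlx : l ≤ x) (hxu : x ≤ u) (g : ι → ℝ) (j : ι) :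
    reducedFreeGradient α' l u x g j * reducedFreeGradient α' l u x g j ≤
      reducedFreeGradient α' l u x g j * g j := by
  unfold reducedFreeGradient
  split_ifs with hbound hg
  · simp
  · have hl : 0 < (x j - l j) / α' :=
      div_pos (sub_pos.mpr <| (hlx j).lt_of_ne fun h => hbound (.inl h.symm)) hα'
    have hpos : 0 < min ((x j - l j) / α') (g j) := lt_min hl hg
    nlinarith [min_le_right ((x j - l j) / α') (g j)]
  · have hu : (x j - u j) / α' < 0 :=
      div_neg_of_neg_of_pos (sub_neg.mpr <| (hxu j).lt_of_ne fun h => hbound (.inr h)) hα'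
    have hneg : max ((x j - u j) / α') (g j) ≤ 0 := max_le hu.le (not_lt.mp hg)
    nlinarith [le_max_right ((x j - u j) / α') (g j)]

end Gradients

variable {ι : Type*} [Fintype ι]

namespace Matrix

theorem dotProduct_mulVec_self_le_norm_toEuclideanCLM_mul [DecidableEq ι] (A : Matrix ι ι ℝ)
    (v : ι → ℝ) : v ⬝ᵥ A *ᵥ v ≤ ‖toEuclideanCLM (𝕜 := ℝ) A‖ * (v ⬝ᵥ v) := by
  set w : EuclideanSpace ℝ ι := WithLp.toLp 2 v
  have hw : ‖w‖ * ‖w‖ = v ⬝ᵥ v := by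
    rw [← real_inner_self_eq_norm_mul_norm, EuclideanSpace.inner_toLp_toLp, star_trivial]
  calc v ⬝ᵥ A *ᵥ v = inner ℝ w (toEuclideanCLM (𝕜 := ℝ) A w) := (inner_toEuclideanCLM A w w).symm
    _ ≤ ‖w‖ * ‖toEuclideanCLM (𝕜 := ℝ) A w‖ := real_inner_le_norm _ _
    _ ≤ ‖w‖ * (‖toEuclideanCLM (𝕜 := ℝ) A‖ * ‖w‖) := by
      gcongr; exact (toEuclideanCLM (𝕜 := ℝ) A).le_opNorm w
    _ = ‖toEuclideanCLM (𝕜 := ℝ) A‖ * (v ⬝ᵥ v) := by rw [← hw]; ring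

end Matrix

def quadCost (A : Matrix ι ι ℝ) (b v : ι → ℝ) : ℝ :=
  (1 / 2) * (v ⬝ᵥ A *ᵥ v) - v ⬝ᵥ b

theorem quadCost_sub_smul {A : Matrix ι ι ℝ} (hA : A.IsSymm) (b x d : ι → ℝ) (α : ℝ) :
    quadCost A b (x - α • d) =
      quadCost A b x - α * (d ⬝ᵥ (A *ᵥ x - b)) + α ^ 2 / 2 * (d ⬝ᵥ A *ᵥ d) := by
  have hsymm : x ⬝ᵥ A *ᵥ d = d ⬝ᵥ A *ᵥ x := by
    rw [dotProduct_mulVec, ← mulVec_transpose, hA.eq, dotProduct_comm]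
  simp only [quadCost, mulVec_sub, mulVec_smul, sub_dotProduct, dotProduct_sub, smul_dotProduct,
    dotProduct_smul, smul_eq_mul, hsymm]
  ring

theorem quadCost_sub_smul_le [DecidableEq ι] {A : Matrix ι ι ℝ} (hA : A.IsSymm) {b x d : ι → ℝ}
    (hd : d ⬝ᵥ d ≤ d ⬝ᵥ (A *ᵥ x - b)) {α : ℝ} (hα : 0 ≤ α)
    (hαA : α ≤ 2 * ‖toEuclideanCLM (𝕜 := ℝ) A‖⁻¹) :
    quadCost A b (x - α • d) ≤ quadCost A b x := by
  set N := ‖toEuclideanCLM (𝕜 := ℝ) A‖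
  have hαN : α * N ≤ 2 := by
    rcases (norm_nonneg _ : 0 ≤ N).eq_or_lt with hN | hN
    · rw [show N = 0 from hN.symm, mul_zero]; exact zero_le_two
    · exact (le_mul_inv_iff₀ hN).mp hαA
  have hquad := dotProduct_mulVec_self_le_norm_toEuclideanCLM_mul A d
  have hdd : 0 ≤ d ⬝ᵥ d := Finset.sum_nonneg fun j _ => mul_self_nonneg (d j)
  rw [quadCost_sub_smul hA]
  suffices α ^ 2 / 2 * (d ⬝ᵥ A *ᵥ d) ≤ α * (d ⬝ᵥ (A *ᵥ x - b)) by linarith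
  calc α ^ 2 / 2 * (d ⬝ᵥ A *ᵥ d) ≤ α ^ 2 / 2 * (N * (d ⬝ᵥ d)) := by gcongr
    _ = α * (α * N / 2) * (d ⬝ᵥ d) := by ring
    _ ≤ α * 1 * (d ⬝ᵥ d) := by gcongr; linarith
    _ ≤ α * (d ⬝ᵥ (A *ᵥ x - b)) := by rw [mul_one]; gcongr

end

theorem fixed_step_expansion_decreases_cost_general (n : ℕ) (A : Matrix (Fin n) (Fin n) ℝ)
    (hA : A.IsSymm)
    (b l u x : Fin n → ℝ) (hx : l ≤ x ∧ x ≤ u)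
    (f : (Fin n → ℝ) → ℝ) (hf : ∀ v, f v = (1 / 2) * (v ⬝ᵥ A *ᵥ v) - v ⬝ᵥ b)
    (g : Fin n → ℝ) (hg : g = A *ᵥ x - b)
    (α' : ℝ) (hα' : 0 < α') (d : Fin n → ℝ)
    (hd : (∀ j, d j = if x j = l j ∨ x j = u j then 0 else g j) ∨
          (∀ j, d j = if x j = l j ∨ x j = u j then 0
            else if 0 < g j then min ((x j - l j) / α') (g j)
            else max ((x j - u j) / α') (g j))) :
    ∀ α : ℝ, 0 < α → α ≤ 2 * ‖Matrix.toEuclideanCLM (𝕜 := ℝ) A‖⁻¹ →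
      f (x - α • d) ≤ f x := by
  intro α hα hαA
  have hdg : ∀ j, d j * d j ≤ d j * g j := by
    rcases hd with hd | hd
    · obtain rfl : d = freeGradient l u x g := funext hd
      exact freeGradient_mul_self_le l u x g
    · obtain rfl : d = reducedFreeGradient α' l u x g := funext hd
      exact reducedFreeGradient_mul_self_le hα' hx.1 hx.2 g
  obtain rfl : f = quadCost A b := funext hf
  subst hg
  exact quadCost_sub_smul_le hA (Finset.sum_le_sum fun j _ => hdg j) hα.le hαA

/-- Fixed-step expansion: for a symmetric positive semidefinite `A` with `‖A‖ > 0`,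
`x ∈ Ω`, and `d` either the free gradient `g^f` or the reduced free gradient `g^r`
(with any parameter `ᾱ' > 0`) at `x` with `Ad ≠ 0`, every step length
`0 < ᾱ ≤ 2‖A‖⁻¹` does not increase the unconstrained cost function. -/
theorem fixed_step_expansion_decreases_cost (n : ℕ) (A : Matrix (Fin n) (Fin n) ℝ)
    (hA : A.IsSymm) (hpsd : ∀ v : Fin n → ℝ, 0 ≤ v ⬝ᵥ A *ᵥ v)
    (hN : 0 < ‖Matrix.toEuclideanCLM (𝕜 := ℝ) A‖)
    (b l u x : Fin n → ℝ) (hlu : l ≤ u) (hx : l ≤ x ∧ x ≤ u)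
    (f : (Fin n → ℝ) → ℝ) (hf : ∀ v, f v = (1 / 2) * (v ⬝ᵥ A *ᵥ v) - v ⬝ᵥ b)
    (g : Fin n → ℝ) (hg : g = A *ᵥ x - b)
    (α' : ℝ) (hα' : 0 < α') (d : Fin n → ℝ)
    (hd : (∀ j, d j = if x j = l j ∨ x j = u j then 0 else g j) ∨
          (∀ j, d j = if x j = l j ∨ x j = u j then 0
            else if 0 < g j then min ((x j - l j) / α') (g j)
            else max ((x j - u j) / α') (g j)))
    (hAd : A *ᵥ d ≠ 0) :
    ∀ α : ℝ, 0 < α → α ≤ 2 * ‖Matrix.toEuclideanCLM (𝕜 := ℝ) A‖⁻¹ →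
      f (x - α • d) ≤ f x :=
  fixed_step_expansion_decreases_cost_general n A hA b l u x hx f hf g hg α' hα' d hd
end

section
/- Let A be a symmetric real n×n matrix with operator norm ‖A‖ > 0, b ∈ ℝⁿ, f(x) = (1/2)xᵀAx − xᵀb, g = Ax − b, and let d ∈ ℝⁿ with d ≠ 0, dᵀAd > 0 and dᵀg ≥ 0. Then for every α_u with 0 < α_u ≤ 2, the 'optapprox' adaptive step length ᾱ = α_u·‖A‖⁻¹·(dᵀg)/(dᵀd) satisfies ᾱ ≤ 2·(dᵀg)/(dᵀAd), and consequently f(x − ᾱd) ≤ f(x). -/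
/-!
Along the ray `x - t • d` the cost is the parabola `f x - t (dᵀg) + (t²/2) (dᵀAd)`, which does not
exceed `f x` for `0 ≤ t ≤ 2 (dᵀg)/(dᵀAd)`. Since `dᵀAd ≤ ‖A‖ (dᵀd)`, the optapprox step
`αᵤ ‖A‖⁻¹ (dᵀg)/(dᵀd)` with `αᵤ ≤ 2` is at most `2 (dᵀg)/(‖A‖ (dᵀd)) ≤ 2 (dᵀg)/(dᵀAd)`.
-/

open Matrix

section

variable {ι : Type*} [Fintype ι]

open scoped RealInnerProductSpace in
theorem Matrix.dotProduct_mulVec_self_le_opNorm_mul [DecidableEq ι] (A : Matrix ι ι ℝ)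
    (d : ι → ℝ) : d ⬝ᵥ A *ᵥ d ≤ ‖toEuclideanCLM (𝕜 := ℝ) A‖ * (d ⬝ᵥ d) := by
  set v : EuclideanSpace ℝ ι := WithLp.toLp 2 d
  have hquad : d ⬝ᵥ A *ᵥ d = ⟪v, toEuclideanCLM (𝕜 := ℝ) A v⟫ := (inner_toEuclideanCLM A v v).symm
  have hsq : d ⬝ᵥ d = ‖v‖ ^ 2 := by
    rw [← real_inner_self_eq_norm_sq, EuclideanSpace.inner_eq_star_dotProduct]
    simp [v]
  rw [hquad, hsq]
  calc ⟪v, toEuclideanCLM (𝕜 := ℝ) A v⟫ ≤ ‖v‖ * ‖toEuclideanCLM (𝕜 := ℝ) A v‖ :=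
        real_inner_le_norm _ _
    _ ≤ ‖v‖ * (‖toEuclideanCLM (𝕜 := ℝ) A‖ * ‖v‖) := by gcongr; exact ContinuousLinearMap.le_opNorm _ _
    _ = ‖toEuclideanCLM (𝕜 := ℝ) A‖ * ‖v‖ ^ 2 := by ring

noncomputable def quadraticCost (A : Matrix ι ι ℝ) (b v : ι → ℝ) : ℝ :=
  (1 / 2) * (v ⬝ᵥ A *ᵥ v) - v ⬝ᵥ b

theorem quadraticCost_sub_smul {A : Matrix ι ι ℝ} (hA : A.IsSymm) (b x d : ι → ℝ) (t : ℝ) :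
    quadraticCost A b (x - t • d) =
      quadraticCost A b x - t * (d ⬝ᵥ (A *ᵥ x - b)) + t ^ 2 / 2 * (d ⬝ᵥ A *ᵥ d) := by
  have hsymm : x ⬝ᵥ A *ᵥ d = d ⬝ᵥ A *ᵥ x := by
    rw [dotProduct_mulVec, ← mulVec_transpose, hA.eq, dotProduct_comm]
  simp only [quadraticCost, mulVec_sub, mulVec_smul, sub_dotProduct, dotProduct_sub,
    smul_dotProduct, dotProduct_smul, smul_eq_mul]
  linear_combination (-t / 2) * hsymm

theorem quadraticCost_sub_smul_le {A : Matrix ι ι ℝ} (hA : A.IsSymm) (b x d : ι → ℝ) {t : ℝ}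
    (hd : 0 < d ⬝ᵥ A *ᵥ d) (ht₀ : 0 ≤ t) (ht : t ≤ 2 * (d ⬝ᵥ (A *ᵥ x - b)) / (d ⬝ᵥ A *ᵥ d)) :
    quadraticCost A b (x - t • d) ≤ quadraticCost A b x := by
  have hcurv : t * (d ⬝ᵥ A *ᵥ d) ≤ 2 * (d ⬝ᵥ (A *ᵥ x - b)) := (le_div_iff₀ hd).mp ht
  rw [quadraticCost_sub_smul hA]
  nlinarith [mul_le_mul_of_nonneg_left hcurv ht₀]

end

theorem optapprox_step_le {N q s c αu : ℝ} (hq : 0 < q) (hqN : q ≤ N * s) (hc : 0 ≤ c)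
    (hαu : αu ≤ 2) : αu * N⁻¹ * (c / s) ≤ 2 * c / q := by
  have hNs : 0 < N * s := hq.trans_le hqN
  calc αu * N⁻¹ * (c / s) = αu * (c / (N * s)) := by rw [mul_comm N, ← div_div]; ring
    _ ≤ 2 * (c / (N * s)) := by gcongr
    _ ≤ 2 * (c / q) := by gcongr
    _ = 2 * c / q := by ring

theorem optapprox_step_decreases_cost_general (n : ℕ) (A : Matrix (Fin n) (Fin n) ℝ) (hA : A.IsSymm)
    (b : Fin n → ℝ) (f : (Fin n → ℝ) → ℝ)
    (hf : ∀ v, f v = (1 / 2) * (v ⬝ᵥ A *ᵥ v) - v ⬝ᵥ b)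
    (x : Fin n → ℝ) (g : Fin n → ℝ) (hg : g = A *ᵥ x - b)
    (d : Fin n → ℝ) (hd : 0 < d ⬝ᵥ A *ᵥ d) (hdg : 0 ≤ d ⬝ᵥ g)
    (αu : ℝ) (hαu0 : 0 < αu) (hαu2 : αu ≤ 2) :
    αu * ‖Matrix.toEuclideanCLM (𝕜 := ℝ) A‖⁻¹ * ((d ⬝ᵥ g) / (d ⬝ᵥ d)) ≤
      2 * (d ⬝ᵥ g) / (d ⬝ᵥ A *ᵥ d) ∧
    f (x - (αu * ‖Matrix.toEuclideanCLM (𝕜 := ℝ) A‖⁻¹ * ((d ⬝ᵥ g) / (d ⬝ᵥ d))) • d) ≤ f x := by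
  have hstep := optapprox_step_le hd (dotProduct_mulVec_self_le_opNorm_mul A d) hdg hαu2
  have hstep₀ : 0 ≤ αu * ‖toEuclideanCLM (𝕜 := ℝ) A‖⁻¹ * ((d ⬝ᵥ g) / (d ⬝ᵥ d)) := by
    have : 0 ≤ d ⬝ᵥ d := dotProduct_self_star_nonneg d
    positivity
  obtain rfl : f = quadraticCost A b := funext hf
  subst hg
  exact ⟨hstep, quadraticCost_sub_smul_le hA b x d hd hstep₀ hstep⟩

/-- The `optapprox` adaptive step length `ᾱ = α_u ‖A‖⁻¹ (dᵀg)/(dᵀd)` with `0 < α_u ≤ 2`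
satisfies `ᾱ ≤ 2 (dᵀg)/(dᵀAd)`, and consequently the quadratic cost function decreases. -/
theorem optapprox_step_decreases_cost (n : ℕ) (A : Matrix (Fin n) (Fin n) ℝ) (hA : A.IsSymm)
    (hN : 0 < ‖Matrix.toEuclideanCLM (𝕜 := ℝ) A‖)
    (b : Fin n → ℝ) (f : (Fin n → ℝ) → ℝ)
    (hf : ∀ v, f v = (1 / 2) * (v ⬝ᵥ A *ᵥ v) - v ⬝ᵥ b)
    (x : Fin n → ℝ) (g : Fin n → ℝ) (hg : g = A *ᵥ x - b)
    (d : Fin n → ℝ) (hd0 : d ≠ 0) (hd : 0 < d ⬝ᵥ A *ᵥ d) (hdg : 0 ≤ d ⬝ᵥ g)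
    (αu : ℝ) (hαu0 : 0 < αu) (hαu2 : αu ≤ 2) :
    αu * ‖Matrix.toEuclideanCLM (𝕜 := ℝ) A‖⁻¹ * ((d ⬝ᵥ g) / (d ⬝ᵥ d)) ≤
      2 * (d ⬝ᵥ g) / (d ⬝ᵥ A *ᵥ d) ∧
    f (x - (αu * ‖Matrix.toEuclideanCLM (𝕜 := ℝ) A‖⁻¹ * ((d ⬝ᵥ g) / (d ⬝ᵥ d))) • d) ≤ f x :=
  optapprox_step_decreases_cost_general n A hA b f hf x g hg d hd hdg αu hαu0 hαu2
end

section
/- Let A be a symmetric real n×n matrix, b ∈ ℝⁿ, f(x) = (1/2)xᵀAx − xᵀb, x ∈ Ω with g = Ax − b, and let g^c be the chopped gradient at x with (g^c)ᵀA g^c > 0. With the proportioning step length α* = (gᵀg^c)/((g^c)ᵀA g^c), the proportioning step satisfies f(x − α*·g^c) = f(x) − (gᵀg^c)²/(2·(g^c)ᵀA g^c) ≤ f(x); moreover gᵀg^c = (g^c)ᵀg^c. -/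
open Matrix

/-- The proportioning step with step length `α* = (gᵀg^c)/((g^c)ᵀAg^c)` satisfies
`f(x − α* g^c) = f(x) − (gᵀg^c)²/(2 (g^c)ᵀAg^c) ≤ f(x)`; moreover `gᵀg^c = (g^c)ᵀg^c`. -/
theorem proportioning_step_decrease (n : ℕ) (A : Matrix (Fin n) (Fin n) ℝ) (hA : A.IsSymm)
    (b l u x : Fin n → ℝ) (hlu : l ≤ u) (hx : l ≤ x ∧ x ≤ u)
    (f : (Fin n → ℝ) → ℝ) (hf : ∀ v, f v = (1 / 2) * (v ⬝ᵥ A *ᵥ v) - v ⬝ᵥ b)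
    (g gc : Fin n → ℝ) (hg : g = A *ᵥ x - b)
    (hgc : ∀ j, (l j < x j → x j < u j → gc j = 0) ∧
      (x j = l j → gc j = min (g j) 0) ∧ (x j = u j → gc j = max (g j) 0))
    (hpos : 0 < gc ⬝ᵥ A *ᵥ gc) :
    f (x - ((g ⬝ᵥ gc) / (gc ⬝ᵥ A *ᵥ gc)) • gc) =
      f x - (g ⬝ᵥ gc) ^ 2 / (2 * (gc ⬝ᵥ A *ᵥ gc)) ∧
    f (x - ((g ⬝ᵥ gc) / (gc ⬝ᵥ A *ᵥ gc)) • gc) ≤ f x ∧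
    g ⬝ᵥ gc = gc ⬝ᵥ gc := by
  have hsym : ∀ v w : Fin n → ℝ, v ⬝ᵥ A *ᵥ w = w ⬝ᵥ A *ᵥ v := by
    intro v w
    rw [Matrix.dotProduct_mulVec, ← Matrix.mulVec_transpose, hA.eq, dotProduct_comm]
  set c := gc ⬝ᵥ A *ᵥ gc with hc
  set α := (g ⬝ᵥ gc) / c with hα
  have hcne : c ≠ 0 := ne_of_gt hpos
  have hggc : g ⬝ᵥ gc = x ⬝ᵥ A *ᵥ gc - b ⬝ᵥ gc := by
    rw [hg, sub_dotProduct, hsym x gc, dotProduct_comm]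
  have key : f (x - α • gc) = f x - α * (g ⬝ᵥ gc) + α ^ 2 / 2 * c := by
    rw [hf, hf]
    rw [Matrix.mulVec_sub, Matrix.mulVec_smul]
    simp only [sub_dotProduct, dotProduct_sub, smul_dotProduct,
      dotProduct_smul, smul_eq_mul]
    rw [hsym gc x, hggc, ← hc, dotProduct_comm gc b]
    ring
  have heq : f (x - α • gc) = f x - (g ⬝ᵥ gc) ^ 2 / (2 * c) := by
    rw [key, hα]
    field_simp
    ring
  refine ⟨heq, ?_, ?_⟩
  · rw [heq]
    have : 0 ≤ (g ⬝ᵥ gc) ^ 2 / (2 * c) := by positivity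
    linarith
  · unfold dotProduct
    refine Finset.sum_congr rfl fun j _ => ?_
    obtain ⟨h1, h2, h3⟩ := hgc j
    rcases lt_or_eq_of_le (hx.1 j) with hl | hl
    · rcases lt_or_eq_of_le (hx.2 j) with hu | hu
      · rw [h1 hl hu]; ring
      · rw [h3 hu]
        rcases le_total (g j) 0 with hgj | hgj
        · simp [max_eq_right hgj]
        · rw [max_eq_left hgj]
    · rw [h2 hl.symm]
      rcases le_total (g j) 0 with hgj | hgj
      · rw [min_eq_left hgj]
      · simp [min_eq_right hgj]
end

section
/- Let A be a symmetric positive semidefinite real n×n matrix, b ∈ ℝⁿ, f(x) = (1/2)xᵀAx − xᵀb, and let x ∈ Ω with g = Ax − b, free gradient g^f, chopped gradient g^c, and projected gradient g^P = g^f + g^c. Then x minimizes f over Ω (i.e. f(x) ≤ f(y) for all y ∈ Ω) if and only if g^P(x) = 0. -/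
open Matrix

/-- KKT optimality condition for box-constrained convex QP: `x ∈ Ω` minimizes
`f(x) = (1/2)xᵀAx − xᵀb` over `Ω = {y : l ≤ y ≤ u}` if and only if the projected
gradient `g^P = g^f + g^c` vanishes at `x`. -/
theorem minimizer_iff_projectedGradient_eq_zero (n : ℕ) (A : Matrix (Fin n) (Fin n) ℝ)
    (hA : A.IsSymm) (hpsd : ∀ v : Fin n → ℝ, 0 ≤ v ⬝ᵥ A *ᵥ v)
    (b l u x : Fin n → ℝ) (hlu : l ≤ u) (hx : l ≤ x ∧ x ≤ u)
    (f : (Fin n → ℝ) → ℝ) (hf : ∀ v, f v = (1 / 2) * (v ⬝ᵥ A *ᵥ v) - v ⬝ᵥ b)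
    (g gf gc gP : Fin n → ℝ) (hg : g = A *ᵥ x - b)
    (hgf : ∀ j, gf j = if x j = l j ∨ x j = u j then 0 else g j)
    (hgc : ∀ j, (l j < x j → x j < u j → gc j = 0) ∧
      (x j = l j → gc j = min (g j) 0) ∧ (x j = u j → gc j = max (g j) 0))
    (hgP : gP = gf + gc) :
    (∀ y : Fin n → ℝ, l ≤ y → y ≤ u → f x ≤ f y) ↔ gP = 0 := by
  obtain ⟨hxl, hxu⟩ := hx
  have hsymm : ∀ v w : Fin n → ℝ, v ⬝ᵥ A *ᵥ w = w ⬝ᵥ A *ᵥ v := by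
    intro v w
    rw [dotProduct_mulVec, ← mulVec_transpose, hA, dotProduct_comm]
  -- Taylor expansion of f around x
  have key : ∀ y : Fin n → ℝ,
      f y = f x + g ⬝ᵥ (y - x) + (1 / 2) * ((y - x) ⬝ᵥ A *ᵥ (y - x)) := by
    intro y
    rw [hf, hf, hg]
    simp only [dotProduct_sub, sub_dotProduct, mulVec_sub, dotProduct_comm b y,
      dotProduct_comm b x]
    rw [dotProduct_comm (A *ᵥ x) y, dotProduct_comm (A *ᵥ x) x, hsymm x y]
    ring
  constructor
  · -- minimizer ⇒ gP = 0
    intro hmin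
    -- componentwise variational inequality
    have hvar : ∀ j : Fin n, ∀ s : ℝ, l j ≤ s → s ≤ u j → 0 ≤ g j * (s - x j) := by
      intro j s hs1 hs2
      by_contra hneg
      push_neg at hneg
      set c : ℝ := g j * (s - x j) with hc
      set d : Fin n → ℝ := Function.update x j s - x with hd
      set q : ℝ := d ⬝ᵥ A *ᵥ d with hq
      have hq0 : 0 ≤ q := hpsd d
      set t : ℝ := min 1 (-c / (q + 1)) with ht
      have ht0 : 0 < t := by
        apply lt_min one_pos
        apply div_pos <;> linarith
      have ht1 : t ≤ 1 := min_le_left _ _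
      have htq : t * q < -c := by
        have h1 : t ≤ -c / (q + 1) := min_le_right _ _
        have h2 : t * (q + 1) ≤ -c := by
          rw [← le_div_iff₀ (by positivity)]
          exact h1
        nlinarith
      -- feasible point x + t • d
      set y : Fin n → ℝ := x + t • d with hy
      have hyl : l ≤ y := by
        intro i
        by_cases hij : i = j
        · subst hij
          simp only [hy, hd, Pi.add_apply, Pi.smul_apply, Pi.sub_apply,
            Function.update_self, smul_eq_mul]
          nlinarith [hxl i]
        · simp only [hy, hd, Pi.add_apply, Pi.smul_apply, Pi.sub_apply,
            Function.update_of_ne hij, smul_eq_mul]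
          have := hxl i
          simp only [Pi.le_def] at this ⊢
          linarith [hxl i]
      have hyu : y ≤ u := by
        intro i
        by_cases hij : i = j
        · subst hij
          simp only [hy, hd, Pi.add_apply, Pi.smul_apply, Pi.sub_apply,
            Function.update_self, smul_eq_mul]
          nlinarith [hxu i]
        · simp only [hy, hd, Pi.add_apply, Pi.smul_apply, Pi.sub_apply,
            Function.update_of_ne hij, smul_eq_mul]
          linarith [hxu i]
      have hgd : g ⬝ᵥ d = c := by
        rw [hd, hc]
        simp only [dotProduct, Pi.sub_apply]
        rw [Finset.sum_eq_single j]
        · simp [Function.update_self]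
        · intro i _ hij
          simp [Function.update_of_ne hij]
        · simp
      have hfy : f y = f x + t * c + t ^ 2 / 2 * q := by
        rw [key y, hy]
        have h1 : x + t • d - x = t • d := by abel
        rw [h1]
        simp only [smul_dotProduct, dotProduct_smul, mulVec_smul, smul_eq_mul]
        rw [hgd, ← hq]
        ring
      have hlt : f y < f x := by
        rw [hfy]
        nlinarith
      exact absurd (hmin y hyl hyu) (not_le.mpr hlt)
    -- conclude gP = 0 componentwise
    funext j
    have hlj := hxl j
    have huj := hxu j
    simp only [hgP, Pi.add_apply, Pi.zero_apply]
    rcases eq_or_lt_of_le hlj with hl | hl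
    · -- x j = l j
      have hgfj : gf j = 0 := by rw [hgf]; simp [hl.symm]
      rcases eq_or_lt_of_le huj with hu | hu
      · -- x j = u j as well: min = max forces g j = 0
        have h1 := (hgc j).2.1 hl.symm
        have h2 := (hgc j).2.2 hu
        have : min (g j) 0 = max (g j) 0 := by rw [← h1, h2]
        have hgj : g j = 0 := by
          rcases le_total (g j) 0 with h | h
          · simpa [min_eq_left h, max_eq_right h] using this
          · simpa [min_eq_right h, max_eq_left h] using this.symm
        rw [hgfj, h1, hgj]; simp
      · -- x j = l j < u j
        have h1 := (hgc j).2.1 hl.symm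
        have hvu := hvar j (u j) (hlu j) le_rfl
        have hgj : 0 ≤ g j := by nlinarith
        rw [hgfj, h1, min_eq_right hgj]; simp
    · rcases eq_or_lt_of_le huj with hu | hu
      · -- l j < x j = u j
        have hgfj : gf j = 0 := by rw [hgf]; simp [hu]
        have h1 := (hgc j).2.2 hu
        have hvl := hvar j (l j) le_rfl (hlu j)
        have hgj : g j ≤ 0 := by nlinarith
        rw [hgfj, h1, max_eq_right hgj]; simp
      · -- interior
        have hgfj : gf j = g j := by
          rw [hgf]
          rw [if_neg]
          push_neg
          exact ⟨ne_of_gt hl, ne_of_lt hu⟩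
        have h1 := (hgc j).1 hl hu
        have hvl := hvar j (l j) le_rfl (hlu j)
        have hvu := hvar j (u j) (hlu j) le_rfl
        have hgj : g j = 0 := by nlinarith
        rw [hgfj, h1, hgj]; simp
  · -- gP = 0 ⇒ minimizer
    intro h0 y hyl hyu
    have hterm : ∀ j : Fin n, 0 ≤ g j * (y j - x j) := by
      intro j
      have h0j : gf j + gc j = 0 := by
        have := congrFun h0 j
        simpa [hgP] using this
      rcases eq_or_lt_of_le (hxl j) with hl | hl
      · -- x j = l j : g j ≥ 0 and y j ≥ x j
        have hgfj : gf j = 0 := by rw [hgf]; simp [hl.symm]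
        have h1 := (hgc j).2.1 hl.symm
        have hmin0 : min (g j) 0 = 0 := by rw [← h1]; linarith [h0j, hgfj]
        have hgj : 0 ≤ g j := by
          by_contra h; push_neg at h
          rw [min_eq_left h.le] at hmin0; linarith
        have : x j ≤ y j := by rw [← hl]; exact hyl j
        nlinarith
      · rcases eq_or_lt_of_le (hxu j) with hu | hu
        · -- x j = u j : g j ≤ 0 and y j ≤ x j
          have hgfj : gf j = 0 := by rw [hgf]; simp [hu]
          have h1 := (hgc j).2.2 hu
          have hmax0 : max (g j) 0 = 0 := by rw [← h1]; linarith [h0j, hgfj]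
          have hgj : g j ≤ 0 := by
            by_contra h; push_neg at h
            rw [max_eq_left h.le] at hmax0; linarith
          have : y j ≤ x j := by rw [hu]; exact hyu j
          nlinarith
        · -- interior: g j = 0
          have hgfj : gf j = g j := by
            rw [hgf, if_neg]
            push_neg
            exact ⟨ne_of_gt hl, ne_of_lt hu⟩
          have h1 := (hgc j).1 hl hu
          have hgj : g j = 0 := by rw [← hgfj]; linarith [h0j, h1]
          rw [hgj]; ring_nf; simp
    rw [key y]
    have h1 : 0 ≤ g ⬝ᵥ (y - x) := by
      rw [dotProduct]
      exact Finset.sum_nonneg fun j _ => hterm j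
    have h2 : 0 ≤ (y - x) ⬝ᵥ A *ᵥ (y - x) := hpsd _
    linarith
end
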